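/- Let X be a finite-dimensional real normed space, let F ⊆ X be a nonempty closed bounded convex set, and let Ω_1, …, Ω_n ⊆ X be nonempty closed sets at least one of which is bounded. If inf_{x ∈ X} T(x) < ∞ for T(x) := Σ_{i=1}^n T^F_{Ω_i}(x), then there exists x̄ ∈ X with T(x̄) = inf_{x ∈ X} T(x), i.e., the generalized Fermat–Torricelli problem of minimizing T over X admits an optimal solution. -/

import Mathlib

/-!
Because `F` is compact, the infimum defining `T^F_Ω(x)` is attained, so the sublevel set
`{T^F_Ω ≤ r}` is `Ω - [0, r] • F`: closed, and bounded when `Ω` is. Hence every `T^F_{Ω_i}`, and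
so their sum `T`, is lower semicontinuous. A sublevel set of `T` at a finite value lies in a
sublevel set of `T^F_{Ω_{i₀}}` for a bounded `Ω_{i₀}`, so it is compact in finite dimensions,
and `T` attains its infimum there.
-/

/-- The minimal time function `T^F_Ω(x) := inf{t ≥ 0 : Ω ∩ (x + tF) ≠ ∅}`,
with values in the extended reals (`sInf ∅ = ⊤`). -/
noncomputable def minTime {X : Type*} [AddCommGroup X] [Module ℝ X]
    (F Ω : Set X) (x : X) : EReal :=
  sInf {r : EReal | ∃ t : ℝ, 0 ≤ t ∧ r = (t : EReal) ∧ ∃ f ∈ F, x + t • f ∈ Ω}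

open Set Bornology Pointwise

theorem LowerSemicontinuous.exists_forall_le_of_isCompact_sublevel {α β : Type*}
    [TopologicalSpace α] [LinearOrder β] {f : α → β} (hf : LowerSemicontinuous f) {x₀ : α}
    (hK : IsCompact {x | f x ≤ f x₀}) : ∃ a, ∀ x, f a ≤ f x := by
  obtain ⟨a, ha₀, ha⟩ := (hf.lowerSemicontinuousOn _).exists_isMinOn ⟨x₀, le_refl (f x₀)⟩ hK
  refine ⟨a, fun x => ?_⟩
  by_cases hx : f x ≤ f x₀
  · exact ha hx
  · exact ha₀.trans (le_of_not_ge hx)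

theorem EReal.lowerSemicontinuous_sum {α ι : Type*} [TopologicalSpace α] (s : Finset ι)
    {f : ι → α → EReal} (hf : ∀ i ∈ s, LowerSemicontinuous (f i))
    (hf₀ : ∀ i ∈ s, ∀ x, 0 ≤ f i x) : LowerSemicontinuous fun x => ∑ i ∈ s, f i x := by
  classical
  induction s using Finset.induction_on with
  | empty => simpa using lowerSemicontinuous_const
  | insert i s hi ih =>
    simp only [Finset.sum_insert hi]
    refine (hf i (s.mem_insert_self i)).add'
      (ih (fun j hj => hf j (Finset.mem_insert_of_mem hj))
        fun j hj => hf₀ j (Finset.mem_insert_of_mem hj)) fun x => EReal.continuousAt_add ?_ ?_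
    · exact Or.inr (EReal.bot_lt_zero.trans_le
      (Finset.sum_nonneg fun j hj => hf₀ j (Finset.mem_insert_of_mem hj) x)).ne'
    · exact Or.inl (EReal.bot_lt_zero.trans_le (hf₀ i (s.mem_insert_self i) x)).ne'

theorem minTime_nonneg {X : Type*} [AddCommGroup X] [Module ℝ X] (F Ω : Set X) (x : X) :
    0 ≤ minTime F Ω x :=
  le_sInf fun _ ⟨_, ht₀, hr, _⟩ => hr ▸ EReal.coe_nonneg.2 ht₀

section MinTime

variable {X : Type*} [AddCommGroup X] [Module ℝ X] [TopologicalSpace X]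
  [IsTopologicalAddGroup X] [ContinuousSMul ℝ X] {F Ω : Set X}

theorem isClosed_setOf_exists_add_smul_mem (hF : IsCompact F) (hΩ : IsClosed Ω) (x : X) :
    IsClosed {t : ℝ | ∃ f ∈ F, x + t • f ∈ Ω} := by
  have : CompactSpace F := isCompact_iff_compactSpace.1 hF
  convert isClosedMap_fst_of_compactSpace _
    (hΩ.preimage (by fun_prop : Continuous fun p : ℝ × F => x + p.1 • (p.2 : X))) using 1
  ext t
  simp

theorem minTime_le_coe_iff (hF : IsCompact F) (hΩ : IsClosed Ω) (x : X) (r : ℝ) :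
    minTime F Ω x ≤ r ↔ ∃ t ∈ Icc 0 r, ∃ f ∈ F, x + t • f ∈ Ω := by
  refine ⟨fun h => ?_, fun ⟨t, ⟨ht₀, htr⟩, hft⟩ => ?_⟩
  · set A : Set ℝ := {t | 0 ≤ t ∧ ∃ f ∈ F, x + t • f ∈ Ω}
    have hA : IsClosed A := isClosed_Ici.inter (isClosed_setOf_exists_add_smul_mem hF hΩ x)
    have hAbdd : BddBelow A := ⟨0, fun t ht => ht.1⟩
    obtain ⟨_, ⟨t, ht, rfl, hft⟩, -⟩ :=
      sInf_lt_iff.1 (h.trans_lt (EReal.coe_lt_coe_iff.2 (lt_add_one r)))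
    have hinf : sInf A ∈ A := hA.csInf_mem ⟨t, ht, hft⟩ hAbdd
    have hle : ((sInf A : ℝ) : EReal) ≤ minTime F Ω x :=
      le_sInf fun _ ⟨s, hs, hr, hfs⟩ => hr ▸ EReal.coe_le_coe_iff.2 (csInf_le hAbdd ⟨hs, hfs⟩)
    exact ⟨sInf A, ⟨hinf.1, EReal.coe_le_coe_iff.1 (hle.trans h)⟩, hinf.2⟩
  · exact (sInf_le ⟨t, ht₀, rfl, hft⟩ : minTime F Ω x ≤ t).trans (EReal.coe_le_coe_iff.2 htr)

theorem setOf_minTime_le_coe (hF : IsCompact F) (hΩ : IsClosed Ω) (r : ℝ) :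
    {x | minTime F Ω x ≤ r} = Ω - Icc 0 r • F := by
  ext x
  simp only [mem_ofPred_eq, minTime_le_coe_iff hF hΩ, mem_sub, mem_smul]
  constructor
  · rintro ⟨t, ht, f, hf, hx⟩
    exact ⟨_, hx, _, ⟨t, ht, f, hf, rfl⟩, add_sub_cancel_right x _⟩
  · rintro ⟨_, hω, _, ⟨t, ht, f, hf, rfl⟩, rfl⟩
    exact ⟨t, ht, f, hf, by rwa [sub_add_cancel]⟩

theorem lowerSemicontinuous_minTime (hF : IsCompact F) (hΩ : IsClosed Ω) :
    LowerSemicontinuous (minTime F Ω) := by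
  refine lowerSemicontinuous_iff_isClosed_preimage.2 fun y => ?_
  induction y using EReal.rec with
  | bot =>
    convert isClosed_empty
    ext x
    simpa using (EReal.bot_lt_zero.trans_le (minTime_nonneg F Ω x)).ne'
  | coe r =>
    change IsClosed {x | minTime F Ω x ≤ r}
    rw [setOf_minTime_le_coe hF hΩ, sub_eq_add_neg]
    exact hΩ.add_right_of_isCompact ((isCompact_Icc.smul_set hF).neg)
  | top => simp

end MinTime

theorem isBounded_setOf_minTime_le {X : Type*} [SeminormedAddCommGroup X] [NormedSpace ℝ X]
    {F Ω : Set X} (hF : IsCompact F) (hΩ : IsClosed Ω) (hΩb : IsBounded Ω) (r : ℝ) :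
    IsBounded {x | minTime F Ω x ≤ r} := by
  rw [setOf_minTime_le_coe hF hΩ]
  exact hΩb.sub (isCompact_Icc.smul_set hF).isBounded

theorem stmt_4_general {X : Type*} [NormedAddCommGroup X] [NormedSpace ℝ X]
    [FiniteDimensional ℝ X]
    (F : Set X) (hFcl : IsClosed F)
    (hFbd : Bornology.IsBounded F)
    (n : ℕ) (Ω : Fin n → Set X)
    (hΩcl : ∀ i, IsClosed (Ω i))
    (hbd : ∃ i, Bornology.IsBounded (Ω i))
    (hfin : (⨅ x : X, ∑ i, minTime F (Ω i) x) ≠ ⊤) :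
    ∃ xb : X, (∑ i, minTime F (Ω i) xb) = ⨅ x : X, ∑ i, minTime F (Ω i) x := by
  obtain ⟨i₀, hi₀⟩ := hbd
  have hF : IsCompact F := Metric.isCompact_of_isClosed_isBounded hFcl hFbd
  set T : X → EReal := fun x => ∑ i, minTime F (Ω i) x
  have hT : LowerSemicontinuous T := EReal.lowerSemicontinuous_sum _
    (fun i _ => lowerSemicontinuous_minTime hF (hΩcl i)) fun i _ => minTime_nonneg F (Ω i)
  obtain ⟨x₀, hx₀⟩ := iInf_lt_iff.1 (lt_top_iff_ne_top.2 hfin)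
  have hK : IsCompact {x | T x ≤ T x₀} := by
    refine Metric.isCompact_of_isClosed_isBounded (hT.isClosed_preimage _)
      ((isBounded_setOf_minTime_le hF (hΩcl i₀) hi₀ (T x₀).toReal).subset fun x hx => ?_)
    calc minTime F (Ω i₀) x ≤ T x :=
          Finset.single_le_sum (fun i _ => minTime_nonneg F (Ω i) x) (Finset.mem_univ i₀)
      _ ≤ T x₀ := hx
      _ ≤ (T x₀).toReal := EReal.le_coe_toReal hx₀.ne
  obtain ⟨xb, hxb⟩ := hT.exists_forall_le_of_isCompact_sublevel hK
  exact ⟨xb, le_antisymm (le_iInf hxb) (iInf_le _ _)⟩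

/-- Existence of optimal solutions to the generalized Fermat–Torricelli problem in
finite dimensions. -/
theorem stmt_4 {X : Type*} [NormedAddCommGroup X] [NormedSpace ℝ X]
    [FiniteDimensional ℝ X]
    (F : Set X) (hFne : F.Nonempty) (hFcl : IsClosed F)
    (hFbd : Bornology.IsBounded F) (hFconv : Convex ℝ F)
    (n : ℕ) (Ω : Fin n → Set X)
    (hΩne : ∀ i, (Ω i).Nonempty) (hΩcl : ∀ i, IsClosed (Ω i))
    (hbd : ∃ i, Bornology.IsBounded (Ω i))
    (hfin : (⨅ x : X, ∑ i, minTime F (Ω i) x) ≠ ⊤) :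
    ∃ xb : X, (∑ i, minTime F (Ω i) xb) = ⨅ x : X, ∑ i, minTime F (Ω i) x :=
  stmt_4_general F hFcl hFbd n Ω hΩcl hbd hfin
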